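/- arXiv:1504.03987 — 3 statements merged into one kernel-verified Lean document; each statement's English description precedes it below -/
import Mathlib

section
/- Let Y be a symmetric n×n real matrix and x ∈ {±1}^n. If there exists a diagonal matrix D such that Tr(D) = x^T Y x, D − Y is positive semidefinite, and the second smallest eigenvalue of D − Y is strictly positive, then X = x x^T is the unique optimal solution of the semidefinite program: maximize Tr(YX) subject to X_ii = 1 for all i and X ⪰ 0. -/
/-!
Weak duality: for `X` with unit diagonal and `D` diagonal, `Tr(YX) = Tr D - Tr((D - Y)X)`, and
`Tr((D - Y)X) ≥ 0` because both factors are positive semidefinite. Since `Tr D = xᵀYx`, the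
bound `Tr D` is attained at `xxᵀ`, which forces `(D - Y)x = 0`. Any other optimal `X` has
`Tr((D - Y)X) = 0`, hence `(D - Y)X = 0`, so every column of `X` lies in the kernel of `D - Y`.
As only the smallest eigenvalue of `D - Y` can vanish, this kernel is the line through `x`,
and the unit diagonal pins `X` down to `xxᵀ`.
-/

open Matrix

/-- The `k`-th smallest eigenvalue of a Hermitian matrix (sorted in increasing order). -/
noncomputable def eigSorted {n : ℕ} {M : Matrix (Fin n) (Fin n) ℝ}
    (hM : M.IsHermitian) : Fin n → ℝ :=
  hM.eigenvalues ∘ Tuple.sort hM.eigenvalues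

open Module

theorem Submodule.exists_smul_eq_of_finrank_le_one {K V : Type*} [DivisionRing K]
    [AddCommGroup V] [Module K V] {S : Submodule K V} [FiniteDimensional K S]
    (hS : finrank K S ≤ 1) {x y : V} (hx : x ∈ S) (hx0 : x ≠ 0) (hy : y ∈ S) :
    ∃ c : K, c • x = y := by
  have hx0' : (⟨x, hx⟩ : S) ≠ 0 := by simpa using hx0
  have hS1 : finrank K S = 1 :=
    le_antisymm hS (finrank_pos_iff_exists_ne_zero.mpr ⟨_, hx0'⟩)
  obtain ⟨c, hc⟩ := exists_smul_eq_of_finrank_eq_one hS1 hx0' ⟨y, hy⟩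
  exact ⟨c, congrArg Subtype.val hc⟩

namespace Matrix

section PosSemidef

open scoped ComplexOrder MatrixOrder

variable {ι 𝕜 : Type*} [Fintype ι] [RCLike 𝕜] {M X : Matrix ι ι 𝕜}

theorem PosSemidef.exists_mul_eq_and_trace_mul_eq (hM : M.PosSemidef) (hX : X.PosSemidef) :
    ∃ B C A : Matrix ι ι 𝕜, M * X = Bᴴ * A * C ∧ (M * X).trace = (Aᴴ * A).trace := by
  classical
  obtain ⟨B, rfl⟩ := CStarAlgebra.nonneg_iff_eq_star_mul_self.mp hM.nonneg
  obtain ⟨C, rfl⟩ := CStarAlgebra.nonneg_iff_eq_star_mul_self.mp hX.nonneg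
  refine ⟨B, C, B * Cᴴ, by simp only [star_eq_conjTranspose, Matrix.mul_assoc], ?_⟩
  simp only [star_eq_conjTranspose, conjTranspose_mul, conjTranspose_conjTranspose]
  rw [← Matrix.mul_assoc, trace_mul_comm]
  simp only [Matrix.mul_assoc]

theorem PosSemidef.trace_mul_nonneg (hM : M.PosSemidef) (hX : X.PosSemidef) :
    0 ≤ (M * X).trace := by
  obtain ⟨B, C, A, -, htr⟩ := hM.exists_mul_eq_and_trace_mul_eq hX
  exact htr ▸ (posSemidef_conjTranspose_mul_self A).trace_nonneg

theorem PosSemidef.mul_eq_zero_of_trace_mul_eq_zero (hM : M.PosSemidef) (hX : X.PosSemidef)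
    (h : (M * X).trace = 0) : M * X = 0 := by
  obtain ⟨B, C, A, hMX, htr⟩ := hM.exists_mul_eq_and_trace_mul_eq hX
  rw [htr, trace_conjTranspose_mul_self_eq_zero_iff] at h
  rw [hMX, h, Matrix.mul_zero, Matrix.zero_mul]

end PosSemidef

section Spectral

variable {n : ℕ} {M : Matrix (Fin n) (Fin n) ℝ}

theorem IsHermitian.card_eigenvalues_eq_zero_le_one (hM : M.IsHermitian) (h1 : 1 < n)
    (hgap : 0 < eigSorted hM ⟨1, h1⟩) : Fintype.card {i // hM.eigenvalues i = 0} ≤ 1 := by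
  let σ := Tuple.sort hM.eigenvalues
  -- a zero eigenvalue lies below `eigSorted hM 1`, so it is the smallest one
  have hbottom : ∀ i, hM.eigenvalues i = 0 → σ.symm i = ⟨0, by omega⟩ := by
    intro i hi
    by_contra hne
    have hle : (⟨1, h1⟩ : Fin n) ≤ σ.symm i := by
      rw [Fin.le_def]; exact Nat.one_le_iff_ne_zero.mpr fun h => hne (Fin.ext h)
    have hsorted : eigSorted hM ⟨1, h1⟩ ≤ hM.eigenvalues (σ (σ.symm i)) :=
      Tuple.monotone_sort hM.eigenvalues hle
    rw [Equiv.apply_symm_apply, hi] at hsorted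
    exact hgap.not_ge hsorted
  rw [Fintype.card_le_one_iff]
  rintro ⟨i, hi⟩ ⟨j, hj⟩
  exact Subtype.ext (σ.symm.injective ((hbottom i hi).trans (hbottom j hj).symm))

theorem IsHermitian.finrank_ker_mulVecLin_le_one (hM : M.IsHermitian) (h1 : 1 < n)
    (hgap : 0 < eigSorted hM ⟨1, h1⟩) : finrank ℝ (LinearMap.ker M.mulVecLin) ≤ 1 := by
  have hzero := hM.card_eigenvalues_eq_zero_le_one h1 hgap
  have hrank := hM.rank_eq_card_non_zero_eigs
  have hnullity := LinearMap.finrank_range_add_finrank_ker M.mulVecLin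
  rw [Fintype.card_subtype_compl] at hrank
  simp only [rank, finrank_fintype_fun_eq_card, Fintype.card_fin] at hrank hnullity hzero ⊢
  have := Fintype.card_subtype_le (fun i => hM.eigenvalues i = 0)
  omega

theorem IsHermitian.exists_smul_eq_of_mulVec_eq_zero (hM : M.IsHermitian) (h1 : 1 < n)
    (hgap : 0 < eigSorted hM ⟨1, h1⟩) {x v : Fin n → ℝ} (hx : M *ᵥ x = 0) (hx0 : x ≠ 0)
    (hv : M *ᵥ v = 0) : ∃ c : ℝ, c • x = v :=
  Submodule.exists_smul_eq_of_finrank_le_one (hM.finrank_ker_mulVecLin_le_one h1 hgap) hx hx0 hv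

end Spectral

section Certificate

variable {ι R : Type*} [CommRing R] {D X : Matrix ι ι R}

theorem eq_vecMulVec_of_col_eq_smul {x : ι → R} (hx : ∀ i, x i * x i = 1) (hX : ∀ i, X i i = 1)
    (hcol : ∀ j, ∃ c : R, c • x = fun i => X i j) : X = vecMulVec x x := by
  ext i j
  obtain ⟨c, hc⟩ := hcol j
  have hcj : c * x j = 1 := (congrFun hc j).trans (hX j)
  have hc_eq : c = x j := by
    calc c = c * (x j * x j) := by rw [hx j, mul_one]
      _ = x j := by rw [← mul_assoc, hcj, one_mul]
  rw [vecMulVec_apply, ← congrFun hc i, hc_eq, Pi.smul_apply, smul_eq_mul, mul_comm]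

variable [Fintype ι]

theorem IsDiag.trace_mul_of_diag_eq_one (hD : D.IsDiag) (hX : ∀ i, X i i = 1) :
    (D * X).trace = D.trace := by
  refine Finset.sum_congr rfl fun i _ => ?_
  rw [diag_apply, mul_apply, Finset.sum_eq_single i (fun j _ hji => by rw [hD hji.symm, zero_mul])
    (by simp), hX i, mul_one, diag_apply]

theorem IsDiag.trace_mul_eq_trace_sub_trace_sub_mul (hD : D.IsDiag) (hX : ∀ i, X i i = 1)
    (Y : Matrix ι ι R) : (Y * X).trace = D.trace - ((D - Y) * X).trace := by
  rw [sub_mul, trace_sub, hD.trace_mul_of_diag_eq_one hX, sub_sub_cancel]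

theorem trace_mul_vecMulVec_self (Y : Matrix ι ι R) (x : ι → R) :
    (Y * vecMulVec x x).trace = x ⬝ᵥ Y *ᵥ x := by
  rw [mul_vecMulVec, trace_vecMulVec, dotProduct_comm]

end Certificate

end Matrix

/-- Dual certificate lemma: if there is a diagonal matrix `D` with `Tr D = xᵀYx`,
`D - Y ⪰ 0` and `λ₂(D - Y) > 0`, then `X = xxᵀ` is the unique optimal solution of the
SDP `max Tr(YX) s.t. X_{ii} = 1, X ⪰ 0`. -/
theorem stmt0 {n : ℕ} (hn : 2 ≤ n) (Y D : Matrix (Fin n) (Fin n) ℝ)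
    (x : Fin n → ℝ) (hx : ∀ i, x i = 1 ∨ x i = -1)
    (hD : D.IsDiag) (htr : D.trace = x ⬝ᵥ Y.mulVec x)
    (hpsd : (D - Y).PosSemidef)
    (hgap : 0 < eigSorted hpsd.isHermitian ⟨1, by omega⟩) :
    (∀ X : Matrix (Fin n) (Fin n) ℝ, (∀ i, X i i = 1) → X.PosSemidef →
      (Y * X).trace ≤ (Y * vecMulVec x x).trace) ∧
    (∀ X : Matrix (Fin n) (Fin n) ℝ, (∀ i, X i i = 1) → X.PosSemidef →
      (Y * X).trace = (Y * vecMulVec x x).trace → X = vecMulVec x x) := by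
  have hx_sq : ∀ i, x i * x i = 1 := fun i => by rcases hx i with h | h <;> simp [h]
  have hxx_diag : ∀ i, vecMulVec x x i i = 1 := hx_sq
  have hx0 : x ≠ 0 := fun h => by simpa [h] using hx_sq ⟨0, by omega⟩
  have hslack : ((D - Y) * vecMulVec x x).trace = 0 := by
    rw [sub_mul, trace_sub, hD.trace_mul_of_diag_eq_one hxx_diag, trace_mul_vecMulVec_self, htr,
      sub_self]
  have hker : (D - Y) *ᵥ x = 0 := by
    rw [← hpsd.dotProduct_mulVec_zero_iff, star_trivial, ← trace_mul_vecMulVec_self, hslack]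
  have hvalue (X : Matrix (Fin n) (Fin n) ℝ) (hX : ∀ i, X i i = 1) :=
    hD.trace_mul_eq_trace_sub_trace_sub_mul hX Y
  refine ⟨fun X hXd hX => ?_, fun X hXd hX heq => ?_⟩
  · rw [hvalue X hXd, hvalue _ hxx_diag, hslack]
    linarith [hpsd.trace_mul_nonneg hX]
  · rw [hvalue X hXd, hvalue _ hxx_diag, hslack] at heq
    have hMX : (D - Y) * X = 0 := hpsd.mul_eq_zero_of_trace_mul_eq_zero hX (by linarith)
    exact eq_vecMulVec_of_col_eq_smul hx_sq hXd fun j =>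
      hpsd.isHermitian.exists_smul_eq_of_mulVec_eq_zero (by omega) hgap hker hx0
        (funext fun i => congrFun (congrFun hMX i) j)
end

section
/- Let X be an n×n symmetric random matrix with centered entries, and let σ² = max_i Σ_j E[X_ij²]. Suppose every row satisfies Σ_j E[X_ij²] = σ² (equal row variances), and let w_ij = E[X_ij²]. Then there exist disjoint subsets 𝓘, 𝓙 ⊆ [n] with |𝓘| ≥ n/8 such that for every i ∈ 𝓘, Σ_{j∈𝓙} E[X_ij²] ≥ σ²/8. -/
/-!
Averaging over all `2 ^ n` subsets `S`, each off-diagonal pair `(i, j)` crosses the directed cut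
`(S, Sᶜ)` for exactly `2 ^ (n - 2)` of them, so some cut carries weight at least `n σ² / 4`.
Each row sends at most `σ²` across the cut, so if fewer than `n / 8` rows of `S` sent at least
`σ² / 8` across, the cut would weigh less than `n σ² / 8 + n σ² / 8`.
-/

open Finset

section CutWeight

variable {ι α M 𝕜 : Type*} [Fintype ι] [DecidableEq ι] [AddCommMonoid M]
  [Field 𝕜] [LinearOrder 𝕜] [IsStrictOrderedRing 𝕜]

def cutWeight (w : ι → ι → M) (S : Finset ι) : M := ∑ i ∈ S, ∑ j ∈ Sᶜ, w i j

theorem card_filter_mem_and_notMem {i j : ι} (hij : i ≠ j) :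
    #{S : Finset ι | i ∈ S ∧ j ∉ S} = 2 ^ (Fintype.card ι - 2) := by
  have hIcc : ({S : Finset ι | i ∈ S ∧ j ∉ S} : Finset _) = Icc {i} (univ.erase j) := by
    ext S
    simp [subset_erase]
  rw [hIcc, card_Icc_finset (by simpa using hij), card_erase_of_mem (mem_univ j), card_singleton,
    card_univ, Nat.sub_sub]

theorem cutWeight_eq_sum_ite (w : ι → ι → M) (S : Finset ι) :
    cutWeight w S = ∑ i, ∑ j, if i ∈ S ∧ j ∉ S then w i j else 0 := by
  rw [cutWeight, ← Fintype.sum_ite_mem S]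
  refine sum_congr rfl fun i _ => ?_
  by_cases hi : i ∈ S <;> simp [hi, ← Fintype.sum_ite_mem Sᶜ]

theorem sum_cutWeight (w : ι → ι → M) (hw : ∀ i, w i i = 0) :
    ∑ S, cutWeight w S = 2 ^ (Fintype.card ι - 2) • ∑ i, ∑ j, w i j := by
  simp only [cutWeight_eq_sum_ite, smul_sum]
  rw [sum_comm]
  refine sum_congr rfl fun i _ => ?_
  rw [sum_comm]
  refine sum_congr rfl fun j _ => ?_
  obtain rfl | hij := eq_or_ne i j
  · simp [hw]
  · rw [← sum_filter, sum_const, card_filter_mem_and_notMem hij]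

theorem exists_cutWeight_ge (w : ι → ι → 𝕜) (hw : ∀ i, w i i = 0) :
    ∃ S, (∑ i, ∑ j, w i j) / 4 ≤ cutWeight w S := by
  cases subsingleton_or_nontrivial ι with
  | inl _ =>
    have hzero : ∀ i j, w i j = 0 := fun i j => Subsingleton.elim i j ▸ hw i
    exact ⟨∅, by simp [hzero, cutWeight]⟩
  | inr _ =>
    have hcard : Fintype.card ι = Fintype.card ι - 2 + 2 := by
      have := Fintype.one_lt_card (α := ι); omega
    obtain ⟨S, -, hS⟩ := exists_le_of_sum_le (f := fun _ => (∑ i, ∑ j, w i j) / 4)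
      (g := cutWeight w) univ_nonempty <| by
        rw [sum_cutWeight w hw, sum_const, card_univ, Fintype.card_finset, hcard, nsmul_eq_mul,
          nsmul_eq_mul, Nat.add_sub_cancel]
        push_cast
        exact le_of_eq (by ring)
    exact ⟨S, hS⟩

theorem sum_le_card_filter_mul_add_card_mul (s : Finset α) (f : α → 𝕜) {a b : 𝕜}
    (hf : ∀ i ∈ s, f i ≤ a) (hb : 0 ≤ b) :
    ∑ i ∈ s, f i ≤ #{i ∈ s | b ≤ f i} * a + #s * b := by
  rw [← sum_filter_add_sum_filter_not s (fun i => b ≤ f i)]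
  gcongr
  · rw [← nsmul_eq_mul]
    exact sum_le_card_nsmul _ _ _ fun i hi => hf i (mem_filter.1 hi).1
  · calc ∑ i ∈ s with ¬b ≤ f i, f i ≤ #{i ∈ s | ¬b ≤ f i} * b := by
          rw [← nsmul_eq_mul]
          exact sum_le_card_nsmul _ _ _ fun i hi => (not_le.1 (mem_filter.1 hi).2).le
      _ ≤ #s * b := by gcongr; exact filter_subset _ _

theorem exists_disjoint_card_ge_of_row_sum_eq (w : ι → ι → 𝕜) (s : 𝕜)
    (hw : ∀ i j, 0 ≤ w i j) (hdiag : ∀ i, w i i = 0) (hrow : ∀ i, ∑ j, w i j = s) :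
    ∃ I J : Finset ι, Disjoint I J ∧ (Fintype.card ι : 𝕜) / 8 ≤ #I ∧
      ∀ i ∈ I, s / 8 ≤ ∑ j ∈ J, w i j := by
  rcases le_or_gt s 0 with hs | hs
  · refine ⟨univ, ∅, disjoint_empty_right _, ?_, fun i _ => by rw [sum_empty]; linarith⟩
    rw [card_univ]
    exact div_le_self (Nat.cast_nonneg _) (by norm_num)
  obtain ⟨S, hS⟩ := exists_cutWeight_ge w hdiag
  simp only [hrow, sum_const, card_univ, nsmul_eq_mul] at hS
  set I := {i ∈ S | s / 8 ≤ ∑ j ∈ Sᶜ, w i j}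
  refine ⟨I, Sᶜ, disjoint_compl_right.mono_left (filter_subset _ _), ?_,
    fun i hi => (mem_filter.1 hi).2⟩
  have hrowS : ∀ i ∈ S, ∑ j ∈ Sᶜ, w i j ≤ s := fun i _ =>
    hrow i ▸ sum_le_sum_of_subset_of_nonneg (subset_univ _) fun j _ _ => hw i j
  have hmarkov := sum_le_card_filter_mul_add_card_mul S _ hrowS (by positivity : 0 ≤ s / 8)
  have hScard : (#S : 𝕜) ≤ Fintype.card ι := by exact_mod_cast card_le_univ S
  have hcut : Fintype.card ι * s / 4 ≤ #I * s + Fintype.card ι * (s / 8) :=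
    hS.trans (hmarkov.trans (by gcongr))
  exact le_of_mul_le_mul_right (by linarith) hs

end CutWeight

open MeasureTheory

theorem stmt10_general {Ω : Type*} [MeasurableSpace Ω] (P : Measure Ω)
    {n : ℕ} (X : Fin n → Fin n → Ω → ℝ) (σ : ℝ)
    (hdiag : ∀ i ω, X i i ω = 0)
    (hrow : ∀ i, ∑ j, ∫ ω, (X i j ω) ^ 2 ∂P = σ ^ 2) :
    ∃ I J : Finset (Fin n), Disjoint I J ∧ (n : ℝ) / 8 ≤ I.card ∧
      ∀ i ∈ I, σ ^ 2 / 8 ≤ ∑ j ∈ J, ∫ ω, (X i j ω) ^ 2 ∂P := by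
  simpa using exists_disjoint_card_ge_of_row_sum_eq (fun i j => ∫ ω, (X i j ω) ^ 2 ∂P) (σ ^ 2)
    (fun i j => integral_nonneg fun ω => sq_nonneg _) (fun i => by simp [hdiag]) hrow

/-- For a symmetric random matrix with centered entries, zero diagonal and equal row
variances `σ²`, there are disjoint sets `𝓘, 𝓙 ⊆ [n]` with `|𝓘| ≥ n/8` such that
`∑_{j∈𝓙} E[X_{ij}²] ≥ σ²/8` for every `i ∈ 𝓘`. -/
theorem stmt10 {Ω : Type*} [MeasurableSpace Ω] (P : Measure Ω) [IsProbabilityMeasure P]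
    {n : ℕ} (X : Fin n → Fin n → Ω → ℝ) (σ : ℝ)
    (hsym : ∀ i j, X i j = X j i) (hdiag : ∀ i ω, X i i ω = 0)
    (hcent : ∀ i j, ∫ ω, X i j ω ∂P = 0)
    (hrow : ∀ i, ∑ j, ∫ ω, (X i j ω) ^ 2 ∂P = σ ^ 2) :
    ∃ I J : Finset (Fin n), Disjoint I J ∧ (n : ℝ) / 8 ≤ I.card ∧
      ∀ i ∈ I, σ ^ 2 / 8 ≤ ∑ j ∈ J, ∫ ω, (X i j ω) ^ 2 ∂P :=
  stmt10_general P X σ hdiag hrow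
end

section
/- Let S ~ Binomial(m, p) and 0 < t < 1. Then P[S < t·mp] ≤ (e^{−(1−t)} / t^t)^{mp} = exp(−mp·(1 − t + t log t)). -/
/-!
Exponential Markov inequality with base `t < 1`: on the event `S < a` we have `t ^ (S - a) ≥ 1`,
so `P[S < a] ≤ t ^ (-a) · E[t ^ S] = t ^ (-a) (pt + 1 - p) ^ m` by the binomial theorem. With
`a = t m p` and `pt + 1 - p ≤ exp (-p (1 - t))` this is `exp (-m p (1 - t + t log t))`.
-/

set_option linter.deprecated false
open Finset Real

theorem PMF.binomial_toNNReal_apply {p : ℝ} (hp0 : 0 ≤ p) (hp1 : p.toNNReal ≤ 1) (m : ℕ)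
    (k : Fin (m + 1)) :
    PMF.binomial p.toNNReal hp1 m k
      = ENNReal.ofReal (p ^ (k : ℕ) * (1 - p) ^ (m - k) * m.choose k) := by
  have hq : 0 ≤ 1 - p := sub_nonneg.2 (by simpa using hp1)
  rw [PMF.binomial_apply, Fin.val_last, ENNReal.ofReal_mul (by positivity),
    ENNReal.ofReal_mul (by positivity), ENNReal.ofReal_pow hp0, ENNReal.ofReal_pow hq,
    ENNReal.ofReal_sub _ hp0, ENNReal.ofReal_one, ENNReal.ofReal_natCast]
  rfl

theorem PMF.binomial_toNNReal_toMeasure_setOf {p : ℝ} (hp0 : 0 ≤ p) (hp1 : p.toNNReal ≤ 1)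
    (m : ℕ) (P : ℕ → Prop) [DecidablePred P] :
    (PMF.binomial p.toNNReal hp1 m).toMeasure {k | P k}
      = ENNReal.ofReal (∑ k ∈ range (m + 1),
          if P k then p ^ k * (1 - p) ^ (m - k) * m.choose k else 0) := by
  have hq : 0 ≤ 1 - p := sub_nonneg.2 (by simpa using hp1)
  rw [PMF.toMeasure_apply_fintype, ← Fin.sum_univ_eq_sum_range (fun k =>
      if P k then p ^ k * (1 - p) ^ (m - k) * m.choose k else 0),
    ENNReal.ofReal_sum_of_nonneg (fun k _ => by split_ifs <;> positivity)]
  refine Finset.sum_congr rfl fun k _ => ?_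
  by_cases hk : P k
  · simp [hk, PMF.binomial_toNNReal_apply hp0]
  · simp [hk]

theorem mul_add_one_sub_le_exp (p t : ℝ) : p * t + (1 - p) ≤ exp (-(p * (1 - t))) := by
  linarith [add_one_le_exp (-(p * (1 - t)))]

theorem sum_binomial_mul_pow (p x : ℝ) (m : ℕ) :
    ∑ k ∈ range (m + 1), p ^ k * (1 - p) ^ (m - k) * m.choose k * x ^ k
      = (p * x + (1 - p)) ^ m := by
  rw [add_pow]
  exact Finset.sum_congr rfl fun k _ => by ring

theorem sum_binomial_lt_le_rpow_mul_pow (m : ℕ) {p t : ℝ} (hp0 : 0 ≤ p) (hp1 : p ≤ 1)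
    (ht0 : 0 < t) (ht1 : t ≤ 1) (a : ℝ) :
    ∑ k ∈ range (m + 1), (if (k : ℝ) < a then p ^ k * (1 - p) ^ (m - k) * m.choose k else 0)
      ≤ t ^ (-a) * (p * t + (1 - p)) ^ m := by
  have hq : 0 ≤ 1 - p := sub_nonneg.2 hp1
  calc _ ≤ ∑ k ∈ range (m + 1), p ^ k * (1 - p) ^ (m - k) * m.choose k * t ^ ((k : ℝ) - a) := by
        refine Finset.sum_le_sum fun k _ => ?_
        split_ifs with hk
        · exact le_mul_of_one_le_right (by positivity)
            (one_le_rpow_of_pos_of_le_one_of_nonpos ht0 ht1 (by linarith))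
        · positivity
    _ = t ^ (-a) * ∑ k ∈ range (m + 1), p ^ k * (1 - p) ^ (m - k) * m.choose k * t ^ k := by
        rw [Finset.mul_sum]
        refine Finset.sum_congr rfl fun k _ => ?_
        rw [rpow_sub ht0, rpow_natCast, rpow_neg ht0.le]
        ring
    _ = t ^ (-a) * (p * t + (1 - p)) ^ m := by rw [sum_binomial_mul_pow]

theorem sum_binomial_lt_mul_le_exp (m : ℕ) {p t : ℝ} (hp0 : 0 ≤ p) (hp1 : p ≤ 1)
    (ht0 : 0 < t) (ht1 : t ≤ 1) :
    ∑ k ∈ range (m + 1),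
        (if (k : ℝ) < t * (m * p) then p ^ k * (1 - p) ^ (m - k) * m.choose k else 0)
      ≤ exp (-(m * p) * (1 - t + t * log t)) := by
  have hmgf : (p * t + (1 - p)) ^ m ≤ exp (-(m * p) * (1 - t)) := by
    calc (p * t + (1 - p)) ^ m ≤ exp (-(p * (1 - t))) ^ m :=
          pow_le_pow_left₀ (by nlinarith) (mul_add_one_sub_le_exp p t) m
      _ = exp (-(m * p) * (1 - t)) := by rw [← exp_nat_mul]; ring_nf
  calc _ ≤ t ^ (-(t * (m * p))) * (p * t + (1 - p)) ^ m :=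
        sum_binomial_lt_le_rpow_mul_pow m hp0 hp1 ht0 ht1 _
    _ ≤ exp (-(t * (m * p)) * log t) * exp (-(m * p) * (1 - t)) := by
        rw [rpow_def_of_pos ht0, mul_comm (log t)]
        gcongr
    _ = exp (-(m * p) * (1 - t + t * log t)) := by rw [← exp_add]; ring_nf

/-- Multiplicative Chernoff lower-tail bound for a binomial random variable:
if `S ~ Binomial(m, p)` and `0 < t < 1`, then
`P[S < t·mp] ≤ (e^{−(1−t)}/tᵗ)^{mp} = exp(−mp(1 − t + t log t))`. -/
theorem stmt15 (m : ℕ) (p t : ℝ) (hp0 : 0 ≤ p) (hp1 : ENNReal.ofReal p ≤ 1)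
    (ht0 : 0 < t) (ht1 : t < 1) :
    (PMF.binomial (Real.toNNReal p) (ENNReal.coe_le_one_iff.mp hp1) m).toMeasure
        {k | ((k : ℕ) : ℝ) < t * (m * p)}
      ≤ ENNReal.ofReal (Real.exp (-(m * p) * (1 - t + t * Real.log t))) := by
  rw [PMF.binomial_toNNReal_toMeasure_setOf hp0 _ m fun k => (k : ℝ) < t * (m * p)]
  exact ENNReal.ofReal_le_ofReal
    (sum_binomial_lt_mul_le_exp m hp0 (ENNReal.ofReal_le_one.mp hp1) ht0 ht1.le)
end
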